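/- Let X ∈ ℝ^{I₁×I₂} have singular values d₁ ≥ ⋯ ≥ d_R and let σ > 0. Then the minimum value of (1/2)‖X − Y‖_F² + σ‖Y‖_* over all matrices Y equals Σ_{r=1}^R [ (1/2)min(d_r, σ)² + σ·max(d_r − σ, 0) ], and the rank of the minimizer Ŷ equals the number of singular values d_r strictly greater than σ. -/

import Mathlib

/-!
Split `X = G + E` with `G = U diag(min(d, σ)) Vᵀ` and `E = U diag((d - σ)₊) Vᵀ`. The matrix `G` has
operator norm at most `σ`, so testing `tr(Gᵀ Y)` against an orthonormal eigenbasis of `Yᵀ Y` and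
applying Cauchy–Schwarz gives `tr(Gᵀ Y) ≤ σ ‖Y‖_*` for every `Y`, with equality at `Y = E` because
`G` and `E` share singular vectors; that is, `G = X - E` lies in `σ ∂‖E‖_*`. Expanding
`‖X - Y‖² = ‖G + (E - Y)‖²` then bounds the objective at `Y` below by its value at `E`. That value
and the rank of `E` are read off from the diagonal factors.
-/

open Matrix

/-- The nuclear norm of a real matrix: sum of its singular values,
i.e. the square roots of the eigenvalues of `Xᴴ * X`. -/
noncomputable def nuclearNorm {m n : ℕ} (X : Matrix (Fin m) (Fin n) ℝ) : ℝ :=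
  ∑ i, Real.sqrt ((Matrix.isHermitian_conjTranspose_mul_self X).eigenvalues i)

/-- Squared Frobenius norm. -/
def frobSq {m n : ℕ} (X : Matrix (Fin m) (Fin n) ℝ) : ℝ :=
  ∑ i, ∑ j, (X i j) ^ 2

variable {m n R : ℕ}

lemma frobSq_eq_trace (A : Matrix (Fin m) (Fin n) ℝ) : frobSq A = (Aᵀ * A).trace := by
  simp only [frobSq, trace, diag, mul_apply, transpose_apply, sq]
  exact Finset.sum_comm

lemma frobSq_nonneg (A : Matrix (Fin m) (Fin n) ℝ) : 0 ≤ frobSq A :=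
  Finset.sum_nonneg fun _ _ => Finset.sum_nonneg fun _ _ => sq_nonneg _

lemma frobSq_add (A B : Matrix (Fin m) (Fin n) ℝ) :
    frobSq (A + B) = frobSq A + 2 * (Aᵀ * B).trace + frobSq B := by
  have hBA : (Bᵀ * A).trace = (Aᵀ * B).trace := by
    rw [← trace_transpose, transpose_mul, transpose_transpose]
  simp only [frobSq_eq_trace, transpose_add, Matrix.add_mul, Matrix.mul_add, trace_add, hBA]
  ring

lemma dotProduct_sq_le {ι : Type*} [Fintype ι] (a b : ι → ℝ) :
    (a ⬝ᵥ b) ^ 2 ≤ (a ⬝ᵥ a) * (b ⬝ᵥ b) := by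
  simpa only [dotProduct, sq] using Finset.sum_mul_sq_le_sq_mul_sq Finset.univ a b

lemma trace_eq_sum_dotProduct_mulVec {Q : Matrix (Fin n) (Fin n) ℝ} (hQ : Q * Qᵀ = 1)
    (M : Matrix (Fin n) (Fin n) ℝ) : M.trace = ∑ i, Qᵀ i ⬝ᵥ (M *ᵥ Qᵀ i) := by
  calc M.trace = (Qᵀ * M * Q).trace := by
        rw [Matrix.mul_assoc, trace_mul_comm, Matrix.mul_assoc, hQ, Matrix.mul_one]
    _ = ∑ i, Qᵀ i ⬝ᵥ (M *ᵥ Qᵀ i) := by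
        refine Finset.sum_congr rfl fun i _ => ?_
        rw [diag_apply, Matrix.mul_assoc, mul_apply]
        simp [dotProduct, mulVec, mul_apply]

lemma dotProduct_eigenvectorBasis_self {A : Matrix (Fin n) (Fin n) ℝ} (hA : A.IsHermitian)
    (i : Fin n) : ⇑(hA.eigenvectorBasis i) ⬝ᵥ ⇑(hA.eigenvectorBasis i) = 1 := by
  have h := real_inner_self_eq_norm_sq (hA.eigenvectorBasis i)
  rw [hA.eigenvectorBasis.orthonormal.1 i, EuclideanSpace.inner_eq_star_dotProduct] at h
  simpa using h

lemma mulVec_eigenvectorBasis_dotProduct_self (Y : Matrix (Fin m) (Fin n) ℝ) (i : Fin n) :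
    (Y *ᵥ ⇑((isHermitian_conjTranspose_mul_self Y).eigenvectorBasis i)) ⬝ᵥ
        (Y *ᵥ ⇑((isHermitian_conjTranspose_mul_self Y).eigenvectorBasis i)) =
      (isHermitian_conjTranspose_mul_self Y).eigenvalues i := by
  rw [dotProduct_mulVec, vecMul_mulVec, ← mulVec_transpose, transpose_mul, transpose_transpose,
    ← conjTranspose_eq_transpose_of_trivial, dotProduct_comm,
    (isHermitian_conjTranspose_mul_self Y).mulVec_eigenvectorBasis, dotProduct_smul,
    dotProduct_eigenvectorBasis_self, smul_eq_mul, mul_one]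

lemma trace_transpose_mul_le_nuclearNorm {G : Matrix (Fin m) (Fin n) ℝ} {σ : ℝ} (hσ : 0 ≤ σ)
    (hG : ∀ x, (G *ᵥ x) ⬝ᵥ (G *ᵥ x) ≤ σ ^ 2 * (x ⬝ᵥ x)) (Y : Matrix (Fin m) (Fin n) ℝ) :
    (Gᵀ * Y).trace ≤ σ * nuclearNorm Y := by
  set hY := isHermitian_conjTranspose_mul_self Y
  set Q : Matrix (Fin n) (Fin n) ℝ := ↑hY.eigenvectorUnitary
  have hQ : Q * Qᵀ = 1 := by
    simpa [Q, star_eq_conjTranspose] using Unitary.coe_mul_star_self hY.eigenvectorUnitary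
  rw [trace_eq_sum_dotProduct_mulVec hQ, nuclearNorm, Finset.mul_sum]
  refine Finset.sum_le_sum fun i _ => ?_
  set q := ⇑(hY.eigenvectorBasis i)
  have hq : Qᵀ i = q := rfl
  have hCS := dotProduct_sq_le (G *ᵥ q) (Y *ᵥ q)
  rw [hq, ← mulVec_mulVec, dotProduct_mulVec, vecMul_transpose]
  calc (G *ᵥ q) ⬝ᵥ (Y *ᵥ q) ≤ √(σ ^ 2 * hY.eigenvalues i) := by
        refine Real.le_sqrt_of_sq_le (hCS.trans ?_)
        rw [mulVec_eigenvectorBasis_dotProduct_self]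
        have hGq : (G *ᵥ q) ⬝ᵥ (G *ᵥ q) ≤ σ ^ 2 := by
          simpa only [q, dotProduct_eigenvectorBasis_self, mul_one] using hG q
        exact mul_le_mul_of_nonneg_right hGq
          ((posSemidef_conjTranspose_mul_self Y).eigenvalues_nonneg i)
    _ = σ * √(hY.eigenvalues i) := by rw [Real.sqrt_mul (sq_nonneg σ), Real.sqrt_sq hσ]

section OrthonormalColumns

variable {U : Matrix (Fin m) (Fin R) ℝ} {V : Matrix (Fin n) (Fin R) ℝ}

lemma mulVec_dotProduct_self_of_orthonormal (hU : Uᵀ * U = 1) (z : Fin R → ℝ) :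
    (U *ᵥ z) ⬝ᵥ (U *ᵥ z) = z ⬝ᵥ z := by
  rw [dotProduct_mulVec, vecMul_mulVec, ← mulVec_transpose, transpose_mul, transpose_transpose, hU,
    one_mulVec]

lemma transpose_mulVec_dotProduct_self_le (hV : Vᵀ * V = 1) (x : Fin n → ℝ) :
    (Vᵀ *ᵥ x) ⬝ᵥ (Vᵀ *ᵥ x) ≤ x ⬝ᵥ x := by
  set y := Vᵀ *ᵥ x
  have hxy : x ⬝ᵥ (V *ᵥ y) = y ⬝ᵥ y := by
    rw [dotProduct_mulVec, ← mulVec_transpose]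
  have hres : 0 ≤ (x - V *ᵥ y) ⬝ᵥ (x - V *ᵥ y) :=
    Finset.sum_nonneg fun _ _ => mul_self_nonneg _
  rw [sub_dotProduct, dotProduct_sub, dotProduct_sub, mulVec_dotProduct_self_of_orthonormal hV,
    hxy, dotProduct_comm (V *ᵥ y), hxy] at hres
  linarith

lemma mul_diagonal_mul_transpose_mulVec_dotProduct_self_le {c : Fin R → ℝ} {σ : ℝ}
    (hc : ∀ r, |c r| ≤ σ) (hU : Uᵀ * U = 1) (hV : Vᵀ * V = 1) (x : Fin n → ℝ) :
    ((U * diagonal c * Vᵀ) *ᵥ x) ⬝ᵥ ((U * diagonal c * Vᵀ) *ᵥ x) ≤ σ ^ 2 * (x ⬝ᵥ x) := by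
  set y := Vᵀ *ᵥ x
  have hdiag : (c * y) ⬝ᵥ (c * y) ≤ σ ^ 2 * (y ⬝ᵥ y) := by
    simp only [dotProduct, Finset.mul_sum, Pi.mul_apply]
    refine Finset.sum_le_sum fun r _ => ?_
    have : c r ^ 2 ≤ σ ^ 2 := sq_le_sq' (abs_le.mp (hc r)).1 (abs_le.mp (hc r)).2
    nlinarith [mul_self_nonneg (y r)]
  have hcy : diagonal c *ᵥ y = c * y := funext (mulVec_diagonal c y)
  rw [← mulVec_mulVec, ← mulVec_mulVec, mulVec_dotProduct_self_of_orthonormal hU, hcy]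
  exact hdiag.trans
    (mul_le_mul_of_nonneg_left (transpose_mulVec_dotProduct_self_le hV x) (sq_nonneg σ))

lemma transpose_mul_diagonal_mul_transpose (hU : Uᵀ * U = 1) (c c' : Fin R → ℝ) :
    (U * diagonal c * Vᵀ)ᵀ * (U * diagonal c' * Vᵀ) = V * diagonal (c * c') * Vᵀ := by
  simp only [transpose_mul, transpose_transpose, diagonal_transpose, Matrix.mul_assoc]
  rw [← Matrix.mul_assoc Uᵀ, hU, Matrix.one_mul, ← Matrix.mul_assoc (diagonal c),
    diagonal_mul_diagonal]
  rfl

lemma trace_mul_diagonal_mul_transpose (hV : Vᵀ * V = 1) (c : Fin R → ℝ) :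
    (V * diagonal c * Vᵀ).trace = ∑ r, c r := by
  rw [trace_mul_cycle, hV, Matrix.one_mul, trace_diagonal]

lemma trace_transpose_mul_diagonal_mul_transpose (hU : Uᵀ * U = 1) (hV : Vᵀ * V = 1)
    (c c' : Fin R → ℝ) :
    ((U * diagonal c * Vᵀ)ᵀ * (U * diagonal c' * Vᵀ)).trace = ∑ r, c r * c' r := by
  rw [transpose_mul_diagonal_mul_transpose hU, trace_mul_diagonal_mul_transpose hV]
  rfl

lemma frobSq_mul_diagonal_mul_transpose (hU : Uᵀ * U = 1) (hV : Vᵀ * V = 1) (c : Fin R → ℝ) :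
    frobSq (U * diagonal c * Vᵀ) = ∑ r, c r ^ 2 := by
  simp only [frobSq_eq_trace, trace_transpose_mul_diagonal_mul_transpose hU hV, sq]

open scoped MatrixOrder in
lemma nuclearNorm_eq_trace_sqrt (Y : Matrix (Fin m) (Fin n) ℝ) :
    nuclearNorm Y = (CFC.sqrt (Yᴴ * Y)).trace := by
  have hA := posSemidef_conjTranspose_mul_self Y
  rw [CFC.sqrt_eq_cfc, cfc_nnreal_eq_real _ (Yᴴ * Y), hA.1.cfc_eq]
  simp only [IsHermitian.cfc, Unitary.conjStarAlgAut_apply]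
  rw [trace_mul_cycle, Unitary.coe_star_mul_self, Matrix.one_mul, trace_diagonal]
  simp only [nuclearNorm, Function.comp_apply, RCLike.ofReal_real_eq_id, id, Real.coe_sqrt,
    Real.coe_toNNReal', max_eq_left (hA.eigenvalues_nonneg _)]

open scoped MatrixOrder in
lemma nuclearNorm_mul_diagonal_mul_transpose (hU : Uᵀ * U = 1) (hV : Vᵀ * V = 1)
    {c : Fin R → ℝ} (hc : ∀ r, 0 ≤ c r) :
    nuclearNorm (U * diagonal c * Vᵀ) = ∑ r, c r := by
  set S := V * diagonal c * Vᵀ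
  have hS : S = V * diagonal (fun r => √(c r)) * (V * diagonal (fun r => √(c r)))ᴴ := by
    rw [conjTranspose_eq_transpose_of_trivial, transpose_mul, diagonal_transpose,
      Matrix.mul_assoc, ← Matrix.mul_assoc (diagonal _), diagonal_mul_diagonal]
    simp only [S, Matrix.mul_assoc, Real.mul_self_sqrt (hc _)]
  have hsq : S * S = (U * diagonal c * Vᵀ)ᴴ * (U * diagonal c * Vᵀ) := by
    rw [conjTranspose_eq_transpose_of_trivial, transpose_mul_diagonal_mul_transpose hU]
    simp only [S, Matrix.mul_assoc]
    rw [← Matrix.mul_assoc Vᵀ, hV, Matrix.one_mul, ← Matrix.mul_assoc (diagonal c),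
      diagonal_mul_diagonal]
    rfl
  have hsqrt : CFC.sqrt ((U * diagonal c * Vᵀ)ᴴ * (U * diagonal c * Vᵀ)) = S :=
    (CFC.sqrt_eq_iff _ _ (posSemidef_conjTranspose_mul_self _).nonneg
      (hS ▸ posSemidef_self_mul_conjTranspose _).nonneg).mpr hsq
  rw [nuclearNorm_eq_trace_sqrt, hsqrt, trace_mul_diagonal_mul_transpose hV]

lemma rank_mul_diagonal_mul_transpose (hU : Uᵀ * U = 1) (hV : Vᵀ * V = 1) (c : Fin R → ℝ) :
    (U * diagonal c * Vᵀ).rank = Fintype.card {r // c r ≠ 0} := by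
  have hD : Uᵀ * (U * diagonal c * Vᵀ) * V = diagonal c := by
    simp only [Matrix.mul_assoc, hV, Matrix.mul_one]
    rw [← Matrix.mul_assoc, hU, Matrix.one_mul]
  rw [← rank_diagonal c]
  refine le_antisymm ((rank_mul_le_left _ _).trans (rank_mul_le_right _ _)) ?_
  conv_lhs => rw [← hD]
  exact (rank_mul_le_left _ _).trans (rank_mul_le_right _ _)

end OrthonormalColumns

lemma half_frobSq_sub_add_nuclearNorm_le_of_dual {X E : Matrix (Fin m) (Fin n) ℝ} {σ : ℝ}
    (hdual : ∀ Y : Matrix (Fin m) (Fin n) ℝ, ((X - E)ᵀ * Y).trace ≤ σ * nuclearNorm Y)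
    (hE : ((X - E)ᵀ * E).trace = σ * nuclearNorm E) (Y : Matrix (Fin m) (Fin n) ℝ) :
    (1 / 2) * frobSq (X - E) + σ * nuclearNorm E ≤
      (1 / 2) * frobSq (X - Y) + σ * nuclearNorm Y := by
  have hexpand := frobSq_add (X - E) (E - Y)
  rw [sub_add_sub_cancel, Matrix.mul_sub, trace_sub, hE] at hexpand
  linarith [hdual Y, frobSq_nonneg (E - Y)]

lemma min_add_max_sub (a b : ℝ) : min a b + max (a - b) 0 = a := by
  rcases le_total a b with h | h
  · rw [min_eq_left h, max_eq_right (by linarith), add_zero]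
  · rw [min_eq_right h, max_eq_left (by linarith), add_sub_cancel]

lemma min_mul_max_sub (a b : ℝ) : min a b * max (a - b) 0 = b * max (a - b) 0 := by
  rcases le_total a b with h | h
  · rw [max_eq_right (by linarith), mul_zero, mul_zero]
  · rw [min_eq_right h]

theorem stmt19_general {I₁ I₂ R : ℕ} (X : Matrix (Fin I₁) (Fin I₂) ℝ)
    (U : Matrix (Fin I₁) (Fin R) ℝ) (V : Matrix (Fin I₂) (Fin R) ℝ)
    (d : Fin R → ℝ) (hd : ∀ r, 0 ≤ d r)
    (hU : Uᵀ * U = 1) (hV : Vᵀ * V = 1)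
    (hX : X = U * Matrix.diagonal d * Vᵀ) (σ : ℝ) (hσ : 0 < σ) :
    IsLeast {v : ℝ | ∃ Y : Matrix (Fin I₁) (Fin I₂) ℝ,
        v = (1 / 2) * frobSq (X - Y) + σ * nuclearNorm Y}
      (∑ r, ((1 / 2) * min (d r) σ ^ 2 + σ * max (d r - σ) 0)) ∧
    (U * Matrix.diagonal (fun r => max (d r - σ) 0) * Vᵀ).rank =
      (Finset.univ.filter fun r : Fin R => σ < d r).card ∧
    (1 / 2) * frobSq (X - U * Matrix.diagonal (fun r => max (d r - σ) 0) * Vᵀ) +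
        σ * nuclearNorm (U * Matrix.diagonal (fun r => max (d r - σ) 0) * Vᵀ) =
      ∑ r, ((1 / 2) * min (d r) σ ^ 2 + σ * max (d r - σ) 0) := by
  set e : Fin R → ℝ := fun r => max (d r - σ) 0
  set c : Fin R → ℝ := fun r => min (d r) σ
  set E := U * diagonal e * Vᵀ
  have hXE : X - E = U * diagonal c * Vᵀ := by
    rw [sub_eq_iff_eq_add, hX, ← Matrix.add_mul, ← Matrix.mul_add, diagonal_add]
    simp only [c, e, min_add_max_sub]
  have hnuc : nuclearNorm E = ∑ r, e r :=
    nuclearNorm_mul_diagonal_mul_transpose hU hV fun r => le_max_right _ _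
  have hvalue : (1 / 2) * frobSq (X - E) + σ * nuclearNorm E
      = ∑ r, ((1 / 2) * min (d r) σ ^ 2 + σ * max (d r - σ) 0) := by
    rw [hXE, frobSq_mul_diagonal_mul_transpose hU hV, hnuc, Finset.mul_sum, Finset.mul_sum,
      ← Finset.sum_add_distrib]
  have hdual (Y : Matrix (Fin I₁) (Fin I₂) ℝ) : ((X - E)ᵀ * Y).trace ≤ σ * nuclearNorm Y := by
    have hc (r : Fin R) : |c r| ≤ σ :=
      abs_le.mpr ⟨by linarith [le_min (hd r) hσ.le], min_le_right _ _⟩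
    rw [hXE]
    exact trace_transpose_mul_le_nuclearNorm hσ.le
      (mul_diagonal_mul_transpose_mulVec_dotProduct_self_le hc hU hV) Y
  have hE : ((X - E)ᵀ * E).trace = σ * nuclearNorm E := by
    rw [hXE, trace_transpose_mul_diagonal_mul_transpose hU hV, hnuc, Finset.mul_sum]
    simp only [c, e, min_mul_max_sub]
  refine ⟨⟨⟨E, hvalue.symm⟩, ?_⟩, ?_, hvalue⟩
  · rintro _ ⟨Y, rfl⟩
    exact hvalue ▸ half_frobSq_sub_add_nuclearNorm_le_of_dual hdual hE Y
  · rw [rank_mul_diagonal_mul_transpose hU hV, Fintype.card_subtype]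
    exact congrArg Finset.card (Finset.filter_congr fun r _ => by simp [e])

theorem stmt19 {I₁ I₂ R : ℕ} (X : Matrix (Fin I₁) (Fin I₂) ℝ)
    (U : Matrix (Fin I₁) (Fin R) ℝ) (V : Matrix (Fin I₂) (Fin R) ℝ)
    (d : Fin R → ℝ) (hd : ∀ r, 0 ≤ d r) (hmono : ∀ r s : Fin R, r ≤ s → d s ≤ d r)
    (hU : Uᵀ * U = 1) (hV : Vᵀ * V = 1)
    (hX : X = U * Matrix.diagonal d * Vᵀ) (σ : ℝ) (hσ : 0 < σ) :
    IsLeast {v : ℝ | ∃ Y : Matrix (Fin I₁) (Fin I₂) ℝ,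
        v = (1 / 2) * frobSq (X - Y) + σ * nuclearNorm Y}
      (∑ r, ((1 / 2) * min (d r) σ ^ 2 + σ * max (d r - σ) 0)) ∧
    (U * Matrix.diagonal (fun r => max (d r - σ) 0) * Vᵀ).rank =
      (Finset.univ.filter fun r : Fin R => σ < d r).card ∧
    (1 / 2) * frobSq (X - U * Matrix.diagonal (fun r => max (d r - σ) 0) * Vᵀ) +
        σ * nuclearNorm (U * Matrix.diagonal (fun r => max (d r - σ) 0) * Vᵀ) =
      ∑ r, ((1 / 2) * min (d r) σ ^ 2 + σ * max (d r - σ) 0) :=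
  stmt19_general X U V d hd hU hV hX σ hσ
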